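/- Let n ≥ 2, λ > -n/2, μ a finite positive Borel measure on S^{n-1}, and u the P_λ-Poisson integral of μ. Then for every unit vector ζ, the function r ↦ ((1+r)^(n-1)/(1-r)^(1+2λ)) · u(rζ) is monotone increasing on [0,1). -/

import Mathlib

/-! After multiplying by the weight, the integrand becomes `((1 + r) / |rζ - ξ|) ^ (n + 2λ)`, and
`n + 2λ > 0`. Writing `t = ⟪ζ, ξ⟫`, the identity
`(1 + s)² |rζ - ξ|² - (1 + r)² |sζ - ξ|² = 2 (s - r) (1 + t) (1 - r s)`
shows that `(1 + r) / |rζ - ξ|` increases in `r ∈ [0, 1)` for every `ξ` on the sphere. -/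

open MeasureTheory Real Metric

section Sphere

variable {E : Type*} [NormedAddCommGroup E] [InnerProductSpace ℝ E] {ζ ξ : E}

lemma one_sub_le_norm_smul_sub (hζ : ‖ζ‖ = 1) (hξ : ‖ξ‖ = 1) {r : ℝ} (hr : 0 ≤ r) :
    1 - r ≤ ‖r • ζ - ξ‖ := by
  have hrζ : ‖r • ζ‖ = r := by rw [norm_smul, hζ, norm_of_nonneg hr, mul_one]
  simpa [hξ, hrζ] using norm_sub_norm_le ξ (r • ζ) |>.trans_eq (norm_sub_rev ξ (r • ζ))

lemma norm_smul_sub_sq (hζ : ‖ζ‖ = 1) (hξ : ‖ξ‖ = 1) (r : ℝ) :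
    ‖r • ζ - ξ‖ ^ 2 = 1 - 2 * r * inner ℝ ζ ξ + r ^ 2 := by
  rw [norm_sub_sq_real, norm_smul, hζ, hξ, real_inner_smul_left, norm_eq_abs, mul_one, sq_abs]
  ring

lemma one_add_mul_norm_smul_sub_le (hζ : ‖ζ‖ = 1) (hξ : ‖ξ‖ = 1) {r s : ℝ} (hr : 0 ≤ r)
    (hrs : r ≤ s) (hs : s < 1) :
    (1 + r) * ‖s • ζ - ξ‖ ≤ (1 + s) * ‖r • ζ - ξ‖ := by
  have ht : 0 ≤ 1 + inner ℝ ζ ξ := by linarith [neg_one_le_real_inner_of_norm_eq_one hζ hξ]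
  have hrs1 : 0 ≤ 1 - r * s := by nlinarith
  have h1r : 0 ≤ 1 + r := by linarith
  have h1s : 0 ≤ 1 + s := by linarith
  rw [← sq_le_sq₀ (by positivity) (by positivity), mul_pow, mul_pow,
    norm_smul_sub_sq hζ hξ, norm_smul_sub_sq hζ hξ]
  nlinarith [mul_nonneg (mul_nonneg (sub_nonneg.mpr hrs) ht) hrs1]

lemma one_add_div_norm_smul_sub_le (hζ : ‖ζ‖ = 1) (hξ : ‖ξ‖ = 1) {r s : ℝ} (hr : 0 ≤ r)
    (hrs : r ≤ s) (hs : s < 1) :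
    (1 + r) / ‖r • ζ - ξ‖ ≤ (1 + s) / ‖s • ζ - ξ‖ := by
  have hpos : ∀ q : ℝ, 0 ≤ q → q < 1 → 0 < ‖q • ζ - ξ‖ := fun q hq hq1 =>
    (sub_pos.mpr hq1).trans_le (one_sub_le_norm_smul_sub hζ hξ hq)
  rw [div_le_div_iff₀ (hpos r hr (hrs.trans_lt hs)) (hpos s (hr.trans hrs) hs)]
  exact one_add_mul_norm_smul_sub_le hζ hξ hr hrs hs

lemma integrable_rpow_one_add_div_norm_smul_sub [MeasurableSpace E] [BorelSpace E]
    (μ : Measure (sphere (0 : E) 1)) [IsFiniteMeasure μ] (hζ : ‖ζ‖ = 1) {r : ℝ} (hr : 0 ≤ r)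
    (hr1 : r < 1) {p : ℝ} (hp : 0 ≤ p) :
    Integrable (fun ξ : sphere (0 : E) 1 => ((1 + r) / ‖r • ζ - (ξ : E)‖) ^ p) μ := by
  have hlb : ∀ ξ : sphere (0 : E) 1, 1 - r ≤ ‖r • ζ - (ξ : E)‖ := fun ξ =>
    one_sub_le_norm_smul_sub hζ (norm_eq_of_mem_sphere ξ) hr
  have hcont : Continuous fun ξ : sphere (0 : E) 1 => ((1 + r) / ‖r • ζ - (ξ : E)‖) ^ p :=
    (continuous_const.div (continuous_const.sub continuous_subtype_val).norm
      fun ξ => ((sub_pos.mpr hr1).trans_le (hlb ξ)).ne').rpow_const fun _ => Or.inr hp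
  refine (integrable_const (((1 + r) / (1 - r)) ^ p)).mono' hcont.aestronglyMeasurable
    (Filter.Eventually.of_forall fun ξ => ?_)
  rw [norm_of_nonneg (by positivity)]
  exact rpow_le_rpow (by positivity)
    (div_le_div_of_nonneg_left (by linarith) (sub_pos.mpr hr1) (hlb ξ)) hp

end Sphere

lemma rpow_div_mul_rpow_div_rpow {r : ℝ} (hr : -1 < r) (hr1 : r < 1) {d : ℝ} (hd : 0 < d)
    {a b p : ℝ} (hab : a + b = p) :
    (1 + r) ^ b / (1 - r) ^ a * ((1 - r ^ 2) ^ a / d ^ p) = ((1 + r) / d) ^ p := by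
  have h1r : 0 < 1 - r := by linarith
  have h1r' : 0 < 1 + r := by linarith
  have hsq : (1 - r ^ 2) ^ a = (1 - r) ^ a * (1 + r) ^ a := by
    rw [show 1 - r ^ 2 = (1 - r) * (1 + r) by ring, mul_rpow h1r.le h1r'.le]
  have hpow : (1 + r) ^ p = (1 + r) ^ b * (1 + r) ^ a := by
    rw [← rpow_add h1r', ← hab, add_comm a b]
  have : (1 - r) ^ a ≠ 0 := (rpow_pos_of_pos h1r a).ne'
  have : d ^ p ≠ 0 := (rpow_pos_of_pos hd p).ne'
  rw [div_rpow h1r'.le hd.le, hsq, hpow]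
  field_simp

theorem stmt9_general (n : ℕ) (l : ℝ) (hl : -(n / 2 : ℝ) < l)
    (μ : MeasureTheory.Measure (Metric.sphere (0 : EuclideanSpace ℝ (Fin n)) 1))
    [MeasureTheory.IsFiniteMeasure μ]
    (u : EuclideanSpace ℝ (Fin n) → ℝ)
    (hu : ∀ x, ‖x‖ < 1 →
      u x = ∫ ξ, (1 - ‖x‖ ^ 2) ^ (1 + 2 * l) / ‖x - (ξ : EuclideanSpace ℝ (Fin n))‖ ^ ((n : ℝ) + 2 * l) ∂μ)
    (ζ : EuclideanSpace ℝ (Fin n)) (hζ : ‖ζ‖ = 1) :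
    MonotoneOn (fun r : ℝ => (1 + r) ^ ((n : ℝ) - 1) / (1 - r) ^ (1 + 2 * l) * u (r • ζ))
      (Set.Ico (0:ℝ) 1) := by
  have hp : 0 ≤ (n : ℝ) + 2 * l := by linarith
  have hweighted : ∀ r ∈ Set.Ico (0 : ℝ) 1,
      (1 + r) ^ ((n : ℝ) - 1) / (1 - r) ^ (1 + 2 * l) * u (r • ζ) =
        ∫ ξ, ((1 + r) / ‖r • ζ - (ξ : EuclideanSpace ℝ (Fin n))‖) ^ ((n : ℝ) + 2 * l) ∂μ := by
    rintro r ⟨hr, hr1⟩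
    have hrζ : ‖r • ζ‖ = r := by rw [norm_smul, hζ, norm_of_nonneg hr, mul_one]
    rw [hu _ (hrζ.trans_lt hr1), ← integral_const_mul, hrζ]
    congr 1 with ξ
    exact rpow_div_mul_rpow_div_rpow (by linarith) hr1
      ((sub_pos.mpr hr1).trans_le (one_sub_le_norm_smul_sub hζ (norm_eq_of_mem_sphere ξ) hr))
      (by ring)
  intro r hr s hs hrs
  dsimp only
  rw [hweighted r hr, hweighted s hs]
  refine integral_mono (integrable_rpow_one_add_div_norm_smul_sub μ hζ hr.1 hr.2 hp)
    (integrable_rpow_one_add_div_norm_smul_sub μ hζ hs.1 hs.2 hp) fun ξ => ?_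
  exact rpow_le_rpow (div_nonneg (by linarith [hr.1]) (norm_nonneg _))
    (one_add_div_norm_smul_sub_le hζ (norm_eq_of_mem_sphere ξ) hr.1 hrs hs.2) hp

theorem stmt9 (n : ℕ) (hn : 2 ≤ n) (l : ℝ) (hl : -(n / 2 : ℝ) < l)
    (μ : MeasureTheory.Measure (Metric.sphere (0 : EuclideanSpace ℝ (Fin n)) 1))
    [MeasureTheory.IsFiniteMeasure μ]
    (u : EuclideanSpace ℝ (Fin n) → ℝ)
    (hu : ∀ x, ‖x‖ < 1 →
      u x = ∫ ξ, (1 - ‖x‖ ^ 2) ^ (1 + 2 * l) / ‖x - (ξ : EuclideanSpace ℝ (Fin n))‖ ^ ((n : ℝ) + 2 * l) ∂μ)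
    (ζ : EuclideanSpace ℝ (Fin n)) (hζ : ‖ζ‖ = 1) :
    MonotoneOn (fun r : ℝ => (1 + r) ^ ((n : ℝ) - 1) / (1 - r) ^ (1 + 2 * l) * u (r • ζ))
      (Set.Ico (0:ℝ) 1) :=
  stmt9_general n l hl μ u hu ζ hζ
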